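/- Substitution Lemma for the CbV Taylor expansion: for a λ-term M, a value V, and a variable x, 𝒯(M[x := V]) equals the union, over t ∈ 𝒯(M) and [v₁,…,v_n] ∈ 𝒯(V), of the linear substitutions t⟨x := v₁,…,v_n⟩. -/

import Mathlib

/-- λ-terms possibly containing the constant ⊥ (Λ⊥). Pure λ-terms are those
satisfying `NoBot`. Variables are natural numbers. -/
inductive Tm : Type
  | var : ℕ → Tm
  | lam : ℕ → Tm → Tm
  | app : Tm → Tm → Tm
  | bot : Tm
deriving DecidableEq

namespace Tm

/-- Values of Λ⊥: ⊥, variables and abstractions. -/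
def IsVal : Tm → Prop
  | var _ => True
  | lam _ _ => True
  | bot => True
  | app _ _ => False

/-- A term is a pure λ-term when it contains no occurrence of ⊥. -/
def NoBot : Tm → Prop
  | var _ => True
  | lam _ M => NoBot M
  | app M N => NoBot M ∧ NoBot N
  | bot => False

/-- `FV x M` : the variable `x` occurs free in `M`. -/
inductive FV : ℕ → Tm → Prop
  | var : ∀ x, FV x (var x)
  | lam : ∀ {x y M}, x ≠ y → FV x M → FV x (lam y M)
  | appL : ∀ {x M N}, FV x M → FV x (app M N)
  | appR : ∀ {x M N}, FV x N → FV x (app M N)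

/-- Capture-avoiding substitution `M[x := N]` (bound variables are assumed to
be suitably renamed, so we substitute naively under binders `≠ x`). -/
def subst : Tm → ℕ → Tm → Tm
  | var y, x, N => if y = x then N else var y
  | lam y P, x, N => if y = x then lam y P else lam y (subst P x N)
  | app P Q, x, N => app (subst P x N) (subst Q x N)
  | bot, _, _ => bot

/-- The v-reduction: contextual closure of the rules β_v, σ₁ and σ₃. -/
inductive Step : Tm → Tm → Prop
  | beta : ∀ {x M V}, IsVal V → Step (app (lam x M) V) (subst M x V)
  | sigma1 : ∀ {x M N P}, ¬ FV x P →
      Step (app (app (lam x M) N) P) (app (lam x (app M P)) N)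
  | sigma3 : ∀ {x V M N}, IsVal V → ¬ FV x V →
      Step (app V (app (lam x M) N)) (app (lam x (app V M)) N)
  | appL : ∀ {M M' N}, Step M M' → Step (app M N) (app M' N)
  | appR : ∀ {M N N'}, Step N N' → Step (app M N) (app M N')
  | lam : ∀ {x M M'}, Step M M' → Step (lam x M) (lam x M')

/-- The σ-reduction: contextual closure of the rules σ₁ and σ₃ only. -/
inductive SStep : Tm → Tm → Prop
  | sigma1 : ∀ {x M N P}, ¬ FV x P →
      SStep (app (app (lam x M) N) P) (app (lam x (app M P)) N)
  | sigma3 : ∀ {x V M N}, IsVal V → ¬ FV x V →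
      SStep (app V (app (lam x M) N)) (app (lam x (app V M)) N)
  | appL : ∀ {M M' N}, SStep M M' → SStep (app M N) (app M' N)
  | appR : ∀ {M N N'}, SStep N N' → SStep (app M N) (app M N')
  | lam : ∀ {x M M'}, SStep M M' → SStep (lam x M) (lam x M')

/-- A term is in v-normal form when no v-reduction step applies. -/
def VNormal (M : Tm) : Prop := ∀ N, ¬ Step M N

mutual
  /-- Grammar of v-normal forms: general normal forms `G ::= H | R`. -/
  inductive IsG : Tm → Prop
    | ofH : ∀ {t}, IsH t → IsG t
    | ofR : ∀ {t}, IsR t → IsG t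
  /-- head normal forms `H ::= x | λx.G | x H G₁ ⋯ G_k`. -/
  inductive IsH : Tm → Prop
    | var : ∀ x, IsH (var x)
    | lam : ∀ {x t}, IsG t → IsH (lam x t)
    | spine : ∀ {t}, IsHSpine t → IsH t
  /-- terms of the shape `x H G₁ ⋯ G_k` (k ≥ 0). -/
  inductive IsHSpine : Tm → Prop
    | head : ∀ {x h}, IsH h → IsHSpine (app (var x) h)
    | app : ∀ {t g}, IsHSpine t → IsG g → IsHSpine (app t g)
  /-- redex-like normal forms `R ::= (λx.G)(y H G₁ ⋯ G_k)`. -/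
  inductive IsR : Tm → Prop
    | mk : ∀ {x t s}, IsG t → IsHSpine s → IsR (app (lam x t) s)
end

mutual
  /-- The set 𝒜 of approximants: `A ::= B | C`. -/
  inductive IsA : Tm → Prop
    | ofB : ∀ {t}, IsB t → IsA t
    | ofC : ∀ {t}, IsC t → IsA t
  /-- `B ::= x | λx.A | ⊥ | x B A₁ ⋯ A_k`. -/
  inductive IsB : Tm → Prop
    | var : ∀ x, IsB (var x)
    | lam : ∀ {x t}, IsA t → IsB (lam x t)
    | bot : IsB bot
    | spine : ∀ {t}, IsBSpine t → IsB t
  /-- terms of the shape `x B A₁ ⋯ A_k` (k ≥ 0). -/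
  inductive IsBSpine : Tm → Prop
    | head : ∀ {x b}, IsB b → IsBSpine (app (var x) b)
    | app : ∀ {t a}, IsBSpine t → IsA a → IsBSpine (app t a)
  /-- `C ::= (λx.A)(y B A₁ ⋯ A_k)`. -/
  inductive IsC : Tm → Prop
    | mk : ∀ {x t s}, IsA t → IsBSpine s → IsC (app (lam x t) s)
end

/-- The order ⊑ on Λ⊥: context-closed preorder generated by ⊥ ⊑ x, ⊥ ⊑ λx.M. -/
inductive LE : Tm → Tm → Prop
  | refl : ∀ t, LE t t
  | botVar : ∀ x, LE bot (var x)
  | botLam : ∀ x t, LE bot (lam x t)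
  | lam : ∀ {x s t}, LE s t → LE (lam x s) (lam x t)
  | app : ∀ {s₁ s₂ t₁ t₂}, LE s₁ t₁ → LE s₂ t₂ → LE (app s₁ s₂) (app t₁ t₂)

/-- The set of approximants of a term:
`𝒜(M) = { A ∈ 𝒜 | ∃ N, M →*_v N and A ⊑ N }`. -/
def ApproxOf (M : Tm) : Set Tm :=
  {A | IsA A ∧ ∃ N, Relation.ReflTransGen Step M N ∧ LE A N}

end Tm

/-- Single-hole (⊥-)contexts. -/
inductive Ctx : Type
  | hole : Ctx
  | appL : Ctx → Tm → Ctx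
  | appR : Tm → Ctx → Ctx
  | lam : ℕ → Ctx → Ctx

/-- Filling the hole of a context with a term (possibly capturing variables). -/
def Ctx.fill : Ctx → Tm → Tm
  | .hole, M => M
  | .appL C N, M => .app (C.fill M) N
  | .appR N C, M => .app N (C.fill M)
  | .lam x C, M => .lam x (C.fill M)

/-- Resource terms of the CbV resource calculus: resource values are
variables `var x` and abstractions `lam x t`; simple terms are applications
`app s t` and bags `bag [v₁,…,v_k]` (finite multisets of values, represented
as lists considered up to permutation by the rules below). -/
inductive RTm : Type
  | var : ℕ → RTm
  | lam : ℕ → RTm → RTm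
  | app : RTm → RTm → RTm
  | bag : List RTm → RTm

namespace RTm

/-- Resource values. -/
def IsRVal : RTm → Prop
  | var _ => True
  | lam _ _ => True
  | _ => False

/-- Simple terms (applications and bags). -/
def IsSimple : RTm → Prop
  | app _ _ => True
  | bag _ => True
  | _ => False

/-- Free-variable occurrence predicate for resource terms. -/
inductive RFV : ℕ → RTm → Prop
  | var : ∀ x, RFV x (var x)
  | lam : ∀ {x y t}, x ≠ y → RFV x t → RFV x (lam y t)
  | appL : ∀ {x s t}, RFV x s → RFV x (app s t)
  | appR : ∀ {x s t}, RFV x t → RFV x (app s t)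
  | bag : ∀ {x t ts}, t ∈ ts → RFV x t → RFV x (bag ts)

/-- Linear substitution: `LSubst e x vs e'` holds iff `e'` is one of the terms
obtained from `e` by substituting the values `vs` bijectively for the free
occurrences of `x` in `e` (no such `e'` exists if the count mismatches). -/
inductive LSubst : RTm → ℕ → List RTm → RTm → Prop
  | varEq : ∀ x v, LSubst (var x) x [v] v
  | varNe : ∀ {x y}, y ≠ x → LSubst (var y) x [] (var y)
  | lamEq : ∀ x t, LSubst (lam x t) x [] (lam x t)
  | lamNe : ∀ {x y t vs t'}, y ≠ x → LSubst t x vs t' →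
      LSubst (lam y t) x vs (lam y t')
  | app : ∀ {s t x us ws vs s' t'}, LSubst s x us s' → LSubst t x ws t' →
      vs.Perm (us ++ ws) → LSubst (app s t) x vs (app s' t')
  | bagNil : ∀ x, LSubst (bag []) x [] (bag [])
  | bagCons : ∀ {v ts x us ws vs v' ts'}, LSubst v x us v' →
      LSubst (bag ts) x ws (bag ts') → vs.Perm (us ++ ws) →
      LSubst (bag (v :: ts)) x vs (bag (v' :: ts'))

/-- One step of resource reduction at the level of terms, producing a
(finite) set of resource terms: rules β_r, 0, σ₁, σ₃, contextually closed. -/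
inductive RStep : RTm → Set RTm → Prop
  | beta : ∀ {x t vs}, (∀ v ∈ vs, IsRVal v) →
      RStep (app (bag [lam x t]) (bag vs)) {t' | LSubst t x vs t'}
  | zero : ∀ {vs t}, (∀ v ∈ vs, IsRVal v) → vs.length ≠ 1 →
      RStep (app (bag vs) t) ∅
  | sigma1 : ∀ {x t s₁ s₂}, ¬ RFV x s₁ →
      RStep (app (app (bag [lam x t]) s₁) s₂) {app (bag [lam x (app t s₂)]) s₁}
  | sigma3 : ∀ {v x t s}, IsRVal v → ¬ RFV x v →
      RStep (app (bag [v]) (app (bag [lam x t]) s))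
        {app (bag [lam x (app (bag [v]) t)]) s}
  | appL : ∀ {s S t}, RStep s S → RStep (app s t) {u | ∃ s' ∈ S, u = app s' t}
  | appR : ∀ {s t T}, RStep t T → RStep (app s t) {u | ∃ t' ∈ T, u = app s t'}
  | lam : ∀ {x t T}, RStep t T → RStep (lam x t) {u | ∃ t' ∈ T, u = lam x t'}
  | bagHead : ∀ {v V ts}, RStep v V →
      RStep (bag (v :: ts)) {u | ∃ v' ∈ V, u = bag (v' :: ts)}
  | bagTail : ∀ {v ts T}, RStep (bag ts) T →
      RStep (bag (v :: ts)) {u | ∃ ts', bag ts' ∈ T ∧ u = bag (v :: ts')}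

/-- The resource reduction →_r lifted to sets of resource terms:
`{e} ∪ E₂ →_r E₁ ∪ E₂` whenever `e →_r E₁` and `e ∉ E₂`. -/
inductive RSetStep : Set RTm → Set RTm → Prop
  | mk : ∀ {e E₁ E₂}, RStep e E₁ → e ∉ E₂ → RSetStep (insert e E₂) (E₁ ∪ E₂)

/-- A set of resource terms is →_r-normal when no set-level step applies. -/
def RSetNormal (S : Set RTm) : Prop := ∀ S', ¬ RSetStep S S'

/-- `NF(E) = ⋃_{e ∈ E} nf_r(e)` : the set of resource terms occurring in the
(unique, by confluence and strong normalization) →_r-normal form of some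
element of `E`. -/
def NF (E : Set RTm) : Set RTm :=
  {t | ∃ e ∈ E, ∃ S, Relation.ReflTransGen RSetStep {e} S ∧ RSetNormal S ∧ t ∈ S}

/-- `HasBRS t` : `t` contains a β_r-, σ₁- or σ₃-redex (0-redexes not counted). -/
inductive HasBRS : RTm → Prop
  | beta : ∀ {x t vs}, (∀ v ∈ vs, IsRVal v) →
      HasBRS (app (bag [lam x t]) (bag vs))
  | sigma1 : ∀ {x t s₁ s₂}, ¬ RFV x s₁ → HasBRS (app (app (bag [lam x t]) s₁) s₂)
  | sigma3 : ∀ {v x t s}, IsRVal v → ¬ RFV x v →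
      HasBRS (app (bag [v]) (app (bag [lam x t]) s))
  | appL : ∀ {s t}, HasBRS s → HasBRS (app s t)
  | appR : ∀ {s t}, HasBRS t → HasBRS (app s t)
  | lam : ∀ {x t}, HasBRS t → HasBRS (lam x t)
  | bag : ∀ {t ts}, t ∈ ts → HasBRS t → HasBRS (bag ts)

mutual
  /-- The height of a resource term. -/
  def height : RTm → ℕ
    | var _ => 0
    | lam _ t => height t + 1
    | app s t => max (height s) (height t) + 1
    | bag ts => heightList ts + 1
  def heightList : List RTm → ℕ
    | [] => 0
    | t :: ts => max (height t) (heightList ts)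
end

/-- The height of a set of resource terms (possibly infinite). -/
noncomputable def hSet (E : Set RTm) : ℕ∞ := ⨆ t ∈ E, (height t : ℕ∞)

/-- The coherence relation ¨ on resource terms. -/
inductive Coh : RTm → RTm → Prop
  | var : ∀ x, Coh (var x) (var x)
  | lam : ∀ {x s t}, Coh s t → Coh (lam x s) (lam x t)
  | bag : ∀ {us vs}, (∀ a ∈ us ++ vs, ∀ b ∈ us ++ vs, Coh a b) →
      Coh (bag us) (bag vs)
  | app : ∀ {s₁ s₂ t₁ t₂}, Coh s₁ s₂ → Coh t₁ t₂ → Coh (app s₁ t₁) (app s₂ t₂)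

/-- A clique: a set of pairwise coherent resource terms. -/
def Clique (E : Set RTm) : Prop := ∀ s ∈ E, ∀ t ∈ E, Coh s t

/-- A maximal clique: no resource term can be added keeping it a clique. -/
def MaxClique (E : Set RTm) : Prop :=
  Clique E ∧ ∀ e : RTm, Clique (insert e E) → e ∈ E

end RTm
/-- The Taylor expansion: `InT M t` iff the simple term `t` belongs to 𝒯(M). -/
inductive InT : Tm → RTm → Prop
  | var : ∀ x n, InT (.var x) (.bag (List.replicate n (.var x)))
  | lam : ∀ {x N} (ts : List RTm), (∀ t ∈ ts, InT N t) →
      InT (.lam x N) (.bag (ts.map (RTm.lam x)))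
  | app : ∀ {P Q s t}, InT P s → InT Q t → InT (.app P Q) (.app s t)

/-- The Taylor expansion 𝒯(M) of a λ-term, as a set of resource terms. -/
def Taylor (M : Tm) : Set RTm := {t | InT M t}

/-- The normalized Taylor expansion of an approximant: `InTn A t` iff
`t ∈ 𝒯ⁿᶠ(A)`, following the grammar of approximants. -/
inductive InTn : Tm → RTm → Prop
  | var : ∀ x n, InTn (.var x) (.bag (List.replicate n (.var x)))
  | bot : InTn .bot (.bag [])
  | lam : ∀ {x A} (ts : List RTm), (∀ t ∈ ts, InTn A t) →
      InTn (.lam x A) (.bag (ts.map (RTm.lam x)))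
  | spineHead : ∀ {x B t}, InTn B t →
      InTn (.app (.var x) B) (.app (.bag [.var x]) t)
  | spineApp : ∀ {S A s t}, Tm.IsBSpine S → InTn S s → InTn A t →
      InTn (.app S A) (.app s t)
  | redex : ∀ {x A Q s t}, InTn A s → Tm.IsBSpine Q → InTn Q t →
      InTn (.app (.lam x A) Q) (.app (.bag [.lam x s]) t)

/-- The normalized Taylor expansion 𝒯ⁿᶠ(A) of an approximant. -/
def TaylorN (A : Tm) : Set RTm := {t | InTn A t}

/-!
For a pure value `V`, `𝒯(V)` is the set of all bags over a set `Q` of resource values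
(`Q = {x}` for a variable, `Q = λy.𝒯(N)` for `λy.N`). Linear substitution of bags over `Q`
commutes with each clause of the Taylor expansion — bags, abstractions, applications — and
`x⟨x := v⟩ = v`, so induction on `M` identifies `𝒯(M[x := V])` with `linSubst 𝒯(M) x Q`.
-/

theorem List.Perm.forall_mem_append {α : Type*} {p : α → Prop} {l l₁ l₂ : List α}
    (h : l.Perm (l₁ ++ l₂)) (hl : ∀ a ∈ l, p a) : (∀ a ∈ l₁, p a) ∧ ∀ a ∈ l₂, p a :=
  List.forall_mem_append.1 fun a ha => hl a (h.mem_iff.2 ha)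

namespace RTm

def bags (Q : Set RTm) : Set RTm := {e | ∃ vs : List RTm, (∀ v ∈ vs, v ∈ Q) ∧ e = bag vs}

def linSubst (S : Set RTm) (x : ℕ) (Q : Set RTm) : Set RTm :=
  {e | ∃ t ∈ S, ∃ vs : List RTm, (∀ v ∈ vs, v ∈ Q) ∧ LSubst t x vs e}

variable {S T Q : Set RTm} {x y : ℕ}

theorem bag_mem_bags {vs : List RTm} : bag vs ∈ bags Q ↔ ∀ v ∈ vs, v ∈ Q := by
  constructor
  · rintro ⟨ws, hws, h⟩
    cases h
    exact hws
  · exact fun h => ⟨vs, h, rfl⟩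

theorem linSubst_empty : linSubst ∅ x Q = ∅ := by
  simp [linSubst]

theorem linSubst_singleton_var_self : linSubst {var x} x Q = Q := by
  ext e
  constructor
  · rintro ⟨_, rfl, vs, hvs, h⟩
    cases h with
    | varEq => exact hvs e (List.mem_singleton_self e)
    | varNe hne => exact absurd rfl hne
  · exact fun he => ⟨_, rfl, [e], by simpa using he, .varEq x e⟩

theorem linSubst_singleton_var_of_ne (hy : y ≠ x) : linSubst {var y} x Q = {var y} := by
  ext e
  constructor
  · rintro ⟨_, rfl, vs, -, h⟩
    cases h with
    | varEq => exact absurd rfl hy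
    | varNe => rfl
  · rintro rfl
    exact ⟨_, rfl, [], by simp, .varNe hy⟩

theorem linSubst_image_lam_self : linSubst (lam x '' S) x Q = lam x '' S := by
  ext e
  constructor
  · rintro ⟨_, ⟨t, ht, rfl⟩, vs, -, h⟩
    cases h with
    | lamEq => exact ⟨t, ht, rfl⟩
    | lamNe hne => exact absurd rfl hne
  · rintro ⟨t, ht, rfl⟩
    exact ⟨_, ⟨t, ht, rfl⟩, [], by simp, .lamEq x t⟩

theorem linSubst_image_lam_of_ne (hy : y ≠ x) :
    linSubst (lam y '' S) x Q = lam y '' linSubst S x Q := by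
  ext e
  constructor
  · rintro ⟨_, ⟨t, ht, rfl⟩, vs, hvs, h⟩
    cases h with
    | lamEq => exact absurd rfl hy
    | lamNe _ h => exact ⟨_, ⟨t, ht, vs, hvs, h⟩, rfl⟩
  · rintro ⟨_, ⟨t, ht, vs, hvs, h⟩, rfl⟩
    exact ⟨_, ⟨t, ht, rfl⟩, vs, hvs, .lamNe hy h⟩

theorem linSubst_image2_app :
    linSubst (Set.image2 app S T) x Q = Set.image2 app (linSubst S x Q) (linSubst T x Q) := by
  ext e
  constructor
  · rintro ⟨_, ⟨s, hs, t, ht, rfl⟩, vs, hvs, h⟩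
    cases h with
    | app hs' ht' hperm =>
      obtain ⟨hus, hws⟩ := hperm.forall_mem_append hvs
      exact ⟨_, ⟨s, hs, _, hus, hs'⟩, _, ⟨t, ht, _, hws, ht'⟩, rfl⟩
  · rintro ⟨_, ⟨s, hs, us, hus, hs'⟩, _, ⟨t, ht, ws, hws, ht'⟩, rfl⟩
    exact ⟨_, ⟨s, hs, t, ht, rfl⟩, us ++ ws, List.forall_mem_append.2 ⟨hus, hws⟩,
      .app hs' ht' (List.Perm.refl _)⟩

theorem linSubst_bags : linSubst (bags S) x Q = bags (linSubst S x Q) := by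
  ext e
  constructor
  · rintro ⟨_, ⟨ts, hts, rfl⟩, vs, hvs, h⟩
    induction ts generalizing vs e with
    | nil =>
      cases h
      exact ⟨[], by simp, rfl⟩
    | cons t ts ih =>
      cases h with
      | bagCons ht' hts' hperm =>
        obtain ⟨hus, hws⟩ := hperm.forall_mem_append hvs
        obtain ⟨ts', hts'', he⟩ := ih _ (fun u hu => hts u (.tail _ hu)) _ hws hts'
        cases he
        exact ⟨_ :: _, List.forall_mem_cons.2 ⟨⟨t, hts t (.head _), _, hus, ht'⟩, hts''⟩, rfl⟩
  · rintro ⟨ts', hts', rfl⟩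
    induction ts' with
    | nil => exact ⟨_, ⟨[], by simp, rfl⟩, [], by simp, .bagNil x⟩
    | cons u ts' ih =>
      obtain ⟨⟨t, ht, us, hus, hu⟩, hts'⟩ := List.forall_mem_cons.1 hts'
      obtain ⟨_, ⟨ts, hts, rfl⟩, ws, hws, h⟩ := ih hts'
      exact ⟨_, ⟨t :: ts, List.forall_mem_cons.2 ⟨ht, hts⟩, rfl⟩, us ++ ws,
        List.forall_mem_append.2 ⟨hus, hws⟩, .bagCons hu h (List.Perm.refl _)⟩

end RTm

open RTm

theorem taylor_var (y : ℕ) : Taylor (.var y) = bags {var y} := by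
  ext e
  constructor
  · rintro ⟨⟩
    exact ⟨_, fun v hv => List.eq_of_mem_replicate hv, rfl⟩
  · rintro ⟨vs, hvs, rfl⟩
    rw [List.eq_replicate_of_mem hvs]
    exact .var y _

theorem taylor_lam (y : ℕ) (N : Tm) : Taylor (.lam y N) = bags (lam y '' Taylor N) := by
  ext e
  constructor
  · intro h
    cases h with
    | lam ts hts =>
      refine ⟨_, fun v hv => ?_, rfl⟩
      obtain ⟨t, ht, rfl⟩ := List.mem_map.1 hv
      exact ⟨t, hts t ht, rfl⟩
  · rintro ⟨vs, hvs, rfl⟩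
    induction vs with
    | nil => exact .lam [] (by simp)
    | cons v vs ih =>
      obtain ⟨⟨t, ht, rfl⟩, hvs'⟩ := List.forall_mem_cons.1 hvs
      cases ih hvs' with
      | lam ts hts => exact .lam (t :: ts) (List.forall_mem_cons.2 ⟨ht, hts⟩)

theorem taylor_app (M N : Tm) : Taylor (.app M N) = Set.image2 app (Taylor M) (Taylor N) := by
  ext e
  constructor
  · intro h
    cases h with
    | app hs ht => exact ⟨_, hs, _, ht, rfl⟩
  · rintro ⟨s, hs, t, ht, rfl⟩
    exact .app hs ht

theorem taylor_bot : Taylor .bot = ∅ := by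
  ext e
  exact ⟨nofun, nofun⟩

theorem exists_taylor_eq_bags {V : Tm} (hV : V.NoBot) (hVal : V.IsVal) :
    ∃ Q, Taylor V = bags Q := by
  cases V with
  | var y => exact ⟨_, taylor_var y⟩
  | lam y N => exact ⟨_, taylor_lam y N⟩
  | app => exact hVal.elim
  | bot => exact hV.elim

theorem taylor_subst_eq_linSubst {V : Tm} {Q : Set RTm} (hQ : Taylor V = bags Q) (x : ℕ) :
    ∀ M : Tm, Taylor (M.subst x V) = linSubst (Taylor M) x Q
  | .var y => by
    by_cases hy : y = x
    · subst hy
      simp [Tm.subst, hQ, taylor_var, linSubst_bags, linSubst_singleton_var_self]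
    · simp [Tm.subst, hy, taylor_var, linSubst_bags, linSubst_singleton_var_of_ne hy]
  | .lam y N => by
    by_cases hy : y = x
    · subst hy
      simp [Tm.subst, taylor_lam, linSubst_bags, linSubst_image_lam_self]
    · simp [Tm.subst, hy, taylor_lam, linSubst_bags, linSubst_image_lam_of_ne hy,
        taylor_subst_eq_linSubst hQ x N]
  | .app M N => by
    simp [Tm.subst, taylor_app, linSubst_image2_app, taylor_subst_eq_linSubst hQ x M,
      taylor_subst_eq_linSubst hQ x N]
  | .bot => by simp [Tm.subst, taylor_bot, linSubst_empty]

/-- Substitution Lemma: `𝒯(M[x := V])` is the union over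
`t ∈ 𝒯(M)` and `[v₁,…,v_n] ∈ 𝒯(V)` of the linear substitutions
`t⟨x := v₁,…,v_n⟩`. -/
theorem taylor_subst (M V : Tm) (x : ℕ)
    (hM : M.NoBot) (hV : V.NoBot) (hVal : V.IsVal) :
    Taylor (M.subst x V) =
      {t' | ∃ t, InT M t ∧
        ∃ vs : List RTm, InT V (.bag vs) ∧ RTm.LSubst t x vs t'} := by
  obtain ⟨Q, hQ⟩ := exists_taylor_eq_bags hV hVal
  have hbag (vs : List RTm) : InT V (.bag vs) ↔ ∀ v ∈ vs, v ∈ Q := by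
    rw [← bag_mem_bags, ← hQ]
    rfl
  rw [taylor_subst_eq_linSubst hQ]
  simp only [linSubst, Taylor, hbag]
  rfl
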